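/- Let K be a field and φ : K[x_1,…,x_n] → K[x_1,…,x_n] the K-algebra homomorphism sending each x_i to x_i^2. If I is a monomial ideal and J = (q_1,…,q_t) is an ideal with √J = I, then √(φ(q_1), …, φ(q_t)) = I. -/
import Mathlib


open MvPolynomial

/-- An ideal of `K[x_1,…,x_n]` is a *monomial ideal* if it is generated by monomials. -/
def IsMonomialIdeal {K : Type*} [Field K] {n : ℕ} (I : Ideal (MvPolynomial (Fin n) K)) : Prop :=
  ∃ S : Set (Fin n →₀ ℕ), I = Ideal.span ((fun d => monomial d (1 : K)) '' S)

lemma aeval_sq_monomial {K : Type*} [Field K] {n : ℕ} (d : Fin n →₀ ℕ) :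
    aeval (fun i => (X i : MvPolynomial (Fin n) K) ^ 2) (monomial d (1 : K)) =
      (monomial d (1 : K)) ^ 2 := by
  rw [aeval_monomial, monomial_eq]
  simp only [map_one, one_mul, mul_pow, one_pow, Finsupp.prod, ← Finset.prod_pow, ← pow_mul,
    mul_comm 2]

/-- Let `φ : K[x_1,…,x_n] → K[x_1,…,x_n]` be the `K`-algebra map sending each `x_i` to
`x_i^2`.  If `I` is a monomial ideal equal to its own radical and `J = (q_1,…,q_t)` satisfies
`√J = I`, then `√(φ q_1, …, φ q_t) = I`. -/
theorem radical_image_square_substitution {K : Type*} [Field K] {n t : ℕ}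
    (I : Ideal (MvPolynomial (Fin n) K)) (hmon : IsMonomialIdeal I) (hrad : I.radical = I)
    (q : Fin t → MvPolynomial (Fin n) K)
    (hJ : (Ideal.span (Set.range q)).radical = I)
    (φ : MvPolynomial (Fin n) K →ₐ[K] MvPolynomial (Fin n) K)
    (hφ : φ = aeval fun i => (X i : MvPolynomial (Fin n) K) ^ 2) :
    (Ideal.span (Set.range fun i => φ (q i))).radical = I := by
  obtain ⟨S, hS⟩ := hmon
  have hφm : ∀ d : Fin n →₀ ℕ, φ (monomial d (1 : K)) = (monomial d (1 : K)) ^ 2 := by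
    intro d; rw [hφ]; exact aeval_sq_monomial d
  have hmapI : Ideal.map φ I ≤ I := by
    rw [hS, Ideal.map_span, Ideal.span_le]
    rintro _ ⟨_, ⟨d, hd, rfl⟩, rfl⟩
    rw [hφm]
    exact Ideal.pow_mem_of_mem _ (Ideal.subset_span (Set.mem_image_of_mem _ hd)) 2 (by norm_num)
  apply le_antisymm
  · rw [← hrad]
    apply Ideal.radical_mono
    rw [Ideal.span_le]
    rintro _ ⟨i, rfl⟩
    have hq : q i ∈ I := by
      rw [← hJ]; exact Ideal.le_radical (Ideal.subset_span ⟨i, rfl⟩)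
    exact hmapI (Ideal.mem_map_of_mem φ hq)
  · rw [hS, Ideal.span_le]
    rintro _ ⟨d, hd, rfl⟩
    have hm : monomial d (1 : K) ∈ (Ideal.span (Set.range q)).radical := by
      rw [hJ, hS]; exact Ideal.subset_span ⟨d, hd, rfl⟩
    obtain ⟨k, hk⟩ := hm
    have hmem : φ ((monomial d (1 : K)) ^ k) ∈
        Ideal.span (Set.range fun i => φ (q i)) := by
      have := Ideal.mem_map_of_mem φ hk
      rwa [Ideal.map_span, ← Set.range_comp] at this
    rw [map_pow, hφm, ← pow_mul] at hmem
    exact ⟨2 * k, hmem⟩
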